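/- With A, B and G as defined, G(i_m) = G(i_1) for every 1 ≤ m ≤ t; that is, G takes the same value at all points of A. -/
import Mathlib


/-- γ_a(ξ) = −max{0, ξ − a} − max{0, a − ξ}. -/
def γfn (a ξ : ℝ) : ℝ := -max 0 (ξ - a) - max 0 (a - ξ)

/-- G(ξ) = ∑_{i∈A} γ_i(ξ) − ∑_{μ∈B} γ_μ(ξ), where A = {i_1 < ... < i_t} is encoded by a
strictly monotone map `a : Fin (t+1) → ℕ` (t+1 ≥ 2 elements) and B is the set of midpoints
of consecutive elements of A. -/
noncomputable def G {t : ℕ} (a : Fin (t + 1) → ℕ) (ξ : ℝ) : ℝ :=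
  (∑ j, γfn (a j : ℝ) ξ) - ∑ j : Fin t, γfn (((a j.castSucc : ℝ) + (a j.succ : ℝ)) / 2) ξ

lemma gam_eq (a ξ : ℝ) : γfn a ξ = -|ξ - a| := by
  unfold γfn
  rcases le_total ξ a with h | h
  · rw [abs_of_nonpos (by linarith), max_eq_left (by linarith), max_eq_right (by linarith)]
    ring
  · rw [abs_of_nonneg (by linarith), max_eq_right (by linarith), max_eq_left (by linarith)]
    ring

lemma mid_abs (x p q : ℝ) (hpq : p ≤ q) (h : x ≤ p ∨ q ≤ x) :
    |x - (p + q) / 2| = (|x - p| + |x - q|) / 2 := by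
  rcases h with h | h
  · rw [abs_of_nonpos (by linarith), abs_of_nonpos (by linarith),
      abs_of_nonpos (by linarith)]
    ring
  · rw [abs_of_nonneg (by linarith), abs_of_nonneg (by linarith),
      abs_of_nonneg (by linarith)]
    ring

lemma G_at (t : ℕ) (a : Fin (t + 1) → ℕ) (ha : StrictMono a) (m : Fin (t + 1)) :
    G a (a m : ℝ) = -(((a (Fin.last t) : ℝ) - (a 0 : ℝ)) / 2) := by
  have hmono : Monotone a := ha.monotone
  set x : ℝ := (a m : ℝ) with hx
  set f : Fin (t + 1) → ℝ := fun j => |x - (a j : ℝ)| with hf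
  have h2 : ∀ j : Fin t,
      γfn (((a j.castSucc : ℝ) + (a j.succ : ℝ)) / 2) x
        = -((f j.castSucc + f j.succ) / 2) := by
    intro j
    rw [gam_eq, mid_abs]
    · exact_mod_cast Nat.cast_le.mpr (hmono (Fin.castSucc_le_succ j))
    · rcases le_or_gt m j.castSucc with h | h
      · exact Or.inl (by exact_mod_cast Nat.cast_le.mpr (hmono h))
      · refine Or.inr ?_
        have : j.succ ≤ m := Fin.castSucc_lt_iff_succ_le.mp h
        exact_mod_cast Nat.cast_le.mpr (hmono this)
  have h1 : ∀ j : Fin (t + 1), γfn (a j : ℝ) x = -(f j) := fun j => gam_eq _ _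
  unfold G
  rw [Finset.sum_congr rfl (fun j _ => h1 j), Finset.sum_congr rfl (fun j _ => h2 j)]
  rw [Finset.sum_neg_distrib, Finset.sum_neg_distrib, ← Finset.sum_div,
    Finset.sum_add_distrib]
  have hc : ∑ j : Fin t, f j.castSucc = (∑ j, f j) - f (Fin.last t) := by
    rw [Fin.sum_univ_castSucc]; ring
  have hs : ∑ j : Fin t, f j.succ = (∑ j, f j) - f 0 := by
    rw [Fin.sum_univ_succ]; ring
  rw [hc, hs]
  have hf0 : f 0 = x - (a 0 : ℝ) := by
    have : (a 0 : ℝ) ≤ x := by exact_mod_cast Nat.cast_le.mpr (hmono (Fin.zero_le m))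
    rw [hf]
    exact abs_of_nonneg (by linarith)
  have hfl : f (Fin.last t) = (a (Fin.last t) : ℝ) - x := by
    have : x ≤ (a (Fin.last t) : ℝ) := by
      exact_mod_cast Nat.cast_le.mpr (hmono (Fin.le_last m))
    show |x - (a (Fin.last t) : ℝ)| = _
    rw [abs_of_nonpos (by linarith)]
    ring
  rw [hf0, hfl]
  ring

/-- G takes the same value at all points of A. -/
theorem stmt6 (n t : ℕ) (ht : 1 ≤ t) (a : Fin (t + 1) → ℕ) (ha : StrictMono a)
    (haI : ∀ j, a j ∈ Finset.Icc 1 n) :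
    ∀ m : Fin (t + 1), G a (a m : ℝ) = G a (a 0 : ℝ) := by
  intro m
  rw [G_at t a ha m, G_at t a ha 0]
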